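/- Let A = U − V be a convergent K-regular splitting of A ∈ ℝ^{n×n} and let U = F − G be a convergent K-weak regular splitting of type II such that V F⁻¹ G = G F⁻¹ V. Then for every integer s ≥ 1, the two-stage iteration matrix T_s satisfies ρ(T_s) < 1. -/

import Mathlib

open Matrix Finset Filter

/-- A proper cone in `ℝ^n`: a closed, pointed, solid convex cone. -/
def IsProperCone {n : ℕ} (K : Set (Fin n → ℝ)) : Prop :=
  IsClosed K ∧ Convex ℝ K ∧ (∀ c : ℝ, 0 ≤ c → ∀ x ∈ K, c • x ∈ K) ∧
    K ∩ (-K) = {0} ∧ (interior K).Nonempty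

/-- `M ≥_K 0`: the matrix `M` leaves the cone `K` invariant. -/
def KNonneg {n : ℕ} (K : Set (Fin n → ℝ)) (M : Matrix (Fin n) (Fin n) ℝ) : Prop :=
  ∀ x ∈ K, M.mulVec x ∈ K

/-- Spectral radius: the supremum of the moduli of the complex eigenvalues. -/
noncomputable def specRad {n : ℕ} (M : Matrix (Fin n) (Fin n) ℝ) : ℝ :=
  sSup ((fun z : ℂ => ‖z‖) '' spectrum ℂ (M.map Complex.ofReal))

/-- `A = U - V` is a `K`-regular splitting. -/
def KRegularSplitting {n : ℕ} (K : Set (Fin n → ℝ))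
    (A U V : Matrix (Fin n) (Fin n) ℝ) : Prop :=
  A = U - V ∧ IsUnit U ∧ KNonneg K U⁻¹ ∧ KNonneg K V

/-- `A = U - V` is a `K`-weak regular splitting of type I. -/
def KWeakRegularSplittingI {n : ℕ} (K : Set (Fin n → ℝ))
    (A U V : Matrix (Fin n) (Fin n) ℝ) : Prop :=
  A = U - V ∧ IsUnit U ∧ KNonneg K U⁻¹ ∧ KNonneg K (U⁻¹ * V)

/-- `A = U - V` is a `K`-weak regular splitting of type II. -/
def KWeakRegularSplittingII {n : ℕ} (K : Set (Fin n → ℝ))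
    (A U V : Matrix (Fin n) (Fin n) ℝ) : Prop :=
  A = U - V ∧ IsUnit U ∧ KNonneg K U⁻¹ ∧ KNonneg K (V * U⁻¹)

/-- `A` is `K`-monotone: invertible with `A⁻¹ ≥_K 0`. -/
def KMonotone {n : ℕ} (K : Set (Fin n → ℝ)) (A : Matrix (Fin n) (Fin n) ℝ) : Prop :=
  IsUnit A ∧ KNonneg K A⁻¹

/-- Two-stage iteration matrix `T_s = (F⁻¹G)^s + Σ_{j=0}^{s-1} (F⁻¹G)^j F⁻¹ V`. -/
noncomputable def twoStageT {n : ℕ} (F G V : Matrix (Fin n) (Fin n) ℝ) (s : ℕ) :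
    Matrix (Fin n) (Fin n) ℝ :=
  (F⁻¹ * G) ^ s + (∑ j ∈ Finset.range s, (F⁻¹ * G) ^ j) * (F⁻¹ * V)

/-- `T̂_s = (GF⁻¹)^s + Σ_{j=0}^{s-1} (GF⁻¹)^j V F⁻¹`. -/
noncomputable def twoStageThat {n : ℕ} (F G V : Matrix (Fin n) (Fin n) ℝ) (s : ℕ) :
    Matrix (Fin n) (Fin n) ℝ :=
  (G * F⁻¹) ^ s + (∑ j ∈ Finset.range s, (G * F⁻¹) ^ j) * (V * F⁻¹)

/-- `Q_s = Σ_{j=0}^{s-1} (F⁻¹G)^j F⁻¹`. -/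
noncomputable def twoStageQ {n : ℕ} (F G : Matrix (Fin n) (Fin n) ℝ) (s : ℕ) :
    Matrix (Fin n) (Fin n) ℝ :=
  (∑ j ∈ Finset.range s, (F⁻¹ * G) ^ j) * F⁻¹

/-!
Conjugation by `F` turns `T_s` into `T̂_s = H^s + (∑_{j<s} H^j) V F⁻¹` with `H = G F⁻¹`.
Since `(1 - H)⁻¹ = F U⁻¹`, the geometric sum factors as
`1 - T̂_s = (1 - H^s) (1 - F U⁻¹ V F⁻¹)`. The matrices `H^s` and `F U⁻¹ V F⁻¹ ∼ U⁻¹ V` are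
`K`-nonnegative with spectral radius `< 1`, so by the Neumann series both factors have
`K`-nonnegative inverses, hence so does `1 - T̂_s`; moreover `T̂_s ≥_K 0`.

Conversely, if `T ≥_K 0` and `(1 - T)⁻¹ ≥_K 0`, then `u = (1 - T)⁻¹ e` for an interior point `e`
satisfies `T u = u - e ≤_K θ u` for some `θ < 1`. As every vector lies in an order interval
`[-c u, c u]` and order intervals of a closed pointed cone are norm bounded, `T^k → 0`, i.e.
`ρ(T) < 1`.
-/

open scoped Topology

section BanachAlgebra

variable {A : Type*} [NormedRing A] [NormedAlgebra ℂ A] [CompleteSpace A]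

theorem tendsto_pow_nhds_zero_of_spectralRadius_lt_one {a : A} (h : spectralRadius ℂ a < 1) :
    Tendsto (a ^ ·) atTop (𝓝 0) := by
  obtain ⟨r, hρr, hr1⟩ := ENNReal.lt_iff_exists_nnreal_btwn.mp h
  have hbound : ∀ᶠ k : ℕ in atTop, ‖a ^ k‖ ≤ (r : ℝ) ^ k := by
    filter_upwards [(spectrum.pow_norm_pow_one_div_tendsto_nhds_spectralRadius
      a).eventually_lt_const hρr, eventually_ge_atTop 1] with k hk hk1
    rw [ENNReal.ofReal_lt_iff_lt_toReal (by positivity) (by simp), ENNReal.coe_toReal, one_div,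
      Real.rpow_inv_lt_iff_of_pos (norm_nonneg _) r.coe_nonneg (Nat.cast_pos.mpr hk1),
      Real.rpow_natCast] at hk
    exact hk.le
  exact squeeze_zero_norm' hbound
    (tendsto_pow_atTop_nhds_zero_of_lt_one r.coe_nonneg (mod_cast hr1))

theorem norm_lt_one_of_mem_spectrum_of_tendsto_pow {a : A} (h : Tendsto (a ^ ·) atTop (𝓝 0))
    {z : ℂ} (hz : z ∈ spectrum ℂ a) : ‖z‖ < 1 := by
  have hbound (k : ℕ) : ‖z‖ ^ k ≤ ‖a ^ k‖ * ‖(1 : A)‖ := by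
    simpa using spectrum.norm_le_norm_mul_of_mem (spectrum.pow_mem_pow a k hz)
  have hlim : Tendsto (fun k => ‖a ^ k‖ * ‖(1 : A)‖) atTop (𝓝 0) := by
    simpa using (tendsto_norm_zero.comp h).mul_const ‖(1 : A)‖
  obtain ⟨k, hk, hk1⟩ := ((hlim.eventually_lt_const one_pos).and (eventually_ge_atTop 1)).exists
  exact (pow_lt_one_iff_of_nonneg (norm_nonneg z) (by omega)).mp ((hbound k).trans_lt hk)

theorem tendsto_pow_nhds_zero_iff_forall_norm_lt_one (a : A) :
    Tendsto (a ^ ·) atTop (𝓝 0) ↔ ∀ z ∈ spectrum ℂ a, ‖z‖ < 1 := by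
  refine ⟨fun h z hz => norm_lt_one_of_mem_spectrum_of_tendsto_pow h hz, fun h => ?_⟩
  nontriviality A
  refine tendsto_pow_nhds_zero_of_spectralRadius_lt_one ?_
  exact_mod_cast spectrum.spectralRadius_lt_of_forall_lt a (r := 1) fun z hz => by
    rw [← NNReal.coe_lt_coe, coe_nnnorm]; exact h z hz

end BanachAlgebra

theorem Matrix.tendsto_of_forall_tendsto_mulVec {ι m k R : Type*} [Fintype k] [DecidableEq k]
    [NonAssocSemiring R] [TopologicalSpace R] {l : Filter ι} {f : ι → Matrix m k R}
    {B : Matrix m k R} (h : ∀ x, Tendsto (fun t => f t *ᵥ x) l (𝓝 (B *ᵥ x))) :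
    Tendsto f l (𝓝 B) := by
  refine tendsto_pi_nhds.2 fun i => tendsto_pi_nhds.2 fun j => ?_
  simpa [Function.comp_def, Matrix.mulVec_single_one] using
    ((continuous_apply i).tendsto _).comp (h (Pi.single j 1))

section SpectralRadius

variable {n : ℕ}

theorem specRad_lt_one_iff (M : Matrix (Fin n) (Fin n) ℝ) :
    specRad M < 1 ↔ ∀ z ∈ spectrum ℂ (M.map Complex.ofReal), ‖z‖ < 1 := by
  rcases (spectrum ℂ (M.map Complex.ofReal)).eq_empty_or_nonempty with h | h
  · simp [specRad, h]
  · rw [specRad, ((Matrix.finite_spectrum _).image _).csSup_lt_iff (h.image _)]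
    simp

theorem SemiconjBy.specRad_eq {P S T : Matrix (Fin n) (Fin n) ℝ} (hP : IsUnit P)
    (h : SemiconjBy P S T) : specRad S = specRad T := by
  have hPdet : IsUnit P.det := (Matrix.isUnit_iff_isUnit_det P).mp hP
  have hS : S = P⁻¹ * T * P := by
    rw [mul_assoc, ← h.eq, ← mul_assoc, Matrix.nonsing_inv_mul P hPdet, one_mul]
  let u : (Matrix (Fin n) (Fin n) ℂ)ˣ :=
    Units.map (Complex.ofRealHom.mapMatrix (m := Fin n)).toMonoidHom hP.unit
  have hu : (P⁻¹ * T * P).map Complex.ofReal =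
      ((u⁻¹ : _ˣ) : Matrix (Fin n) (Fin n) ℂ) * T.map Complex.ofReal * u := by
    change Complex.ofRealHom.mapMatrix (P⁻¹ * T * P) = _
    simp only [RingHom.mapMatrix_apply, Matrix.map_mul, RingHom.toMonoidHom_eq_coe, Units.coe_map,
      IsUnit.unit_spec, MonoidHom.coe_coe, Units.coe_map_inv, Matrix.coe_units_inv, u]
    rfl
  simp only [specRad, hS, hu, spectrum.units_conjugate']

theorem specRad_lt_one_iff_tendsto_pow (M : Matrix (Fin n) (Fin n) ℝ) :
    specRad M < 1 ↔ Tendsto (M ^ ·) atTop (𝓝 0) := by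
  let _ := Matrix.linftyOpNormedRing (n := Fin n) (α := ℂ)
  let _ := Matrix.linftyOpNormedAlgebra (n := Fin n) (R := ℂ) (α := ℂ)
  have hpow (k : ℕ) : (M ^ k).map Complex.ofReal = M.map Complex.ofReal ^ k :=
    Matrix.map_pow M Complex.ofRealHom k
  rw [specRad_lt_one_iff, ← tendsto_pow_nhds_zero_iff_forall_norm_lt_one,
    Complex.isometry_ofReal.isEmbedding.matrix_map.tendsto_nhds_iff]
  simp only [Function.comp_def, hpow, Matrix.map_zero _ Complex.ofReal_zero]
  exact Iff.rfl

theorem specRad_pow_lt_one {M : Matrix (Fin n) (Fin n) ℝ} (h : specRad M < 1) {s : ℕ}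
    (hs : 1 ≤ s) : specRad (M ^ s) < 1 := by
  rw [specRad_lt_one_iff_tendsto_pow] at h ⊢
  simpa [Function.comp_def, ← pow_mul] using h.comp (tendsto_id.const_mul_atTop' hs)

end SpectralRadius

namespace IsProperCone

variable {n : ℕ} {K : Set (Fin n → ℝ)}

theorem zero_mem (hK : IsProperCone K) : (0 : Fin n → ℝ) ∈ K :=
  (hK.2.2.2.1.symm ▸ Set.mem_singleton 0 : (0 : Fin n → ℝ) ∈ K ∩ -K).1

theorem smul_mem (hK : IsProperCone K) {c : ℝ} (hc : 0 ≤ c) {x : Fin n → ℝ} (hx : x ∈ K) :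
    c • x ∈ K :=
  hK.2.2.1 c hc x hx

theorem add_mem (hK : IsProperCone K) {x y : Fin n → ℝ} (hx : x ∈ K) (hy : y ∈ K) : x + y ∈ K := by
  have hmid := hK.2.1 hx hy (by norm_num : (0 : ℝ) ≤ 1 / 2) (by norm_num : (0 : ℝ) ≤ 1 / 2)
    (by norm_num)
  convert hK.smul_mem zero_le_two hmid using 1
  module

theorem eq_zero_of_mem_of_neg_mem (hK : IsProperCone K) {x : Fin n → ℝ} (hx : x ∈ K)
    (hnx : -x ∈ K) : x = 0 := by
  have hx' : x ∈ K ∩ -K := ⟨hx, by simpa using hnx⟩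
  simpa [hK.2.2.2.1] using hx'

theorem eventually_smul_sub_mem (hK : IsProperCone K) {e : Fin n → ℝ} (he : e ∈ interior K)
    (x : Fin n → ℝ) : ∀ᶠ t : ℝ in atTop, t • e - x ∈ K := by
  have hcont : Tendsto (fun s : ℝ => e - s • x) (𝓝[>] 0) (𝓝 e) := by
    refine ((continuous_const.sub (continuous_id.smul continuous_const)).tendsto' 0 e ?_).mono_left
      nhdsWithin_le_nhds
    simp
  obtain ⟨s, hsK, hs⟩ :=
    ((hcont.eventually (mem_interior_iff_mem_nhds.mp he)).and self_mem_nhdsWithin).exists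
  refine eventually_atTop.2 ⟨s⁻¹, fun t ht => ?_⟩
  have hsplit : t • e - x = s⁻¹ • (e - s • x) + (t - s⁻¹) • e := by
    rw [smul_sub, smul_smul, inv_mul_cancel₀ (ne_of_gt hs), one_smul, sub_smul]
    abel
  rw [hsplit]
  exact hK.add_mem (hK.smul_mem (inv_nonneg.2 (le_of_lt hs)) hsK)
    (hK.smul_mem (sub_nonneg.2 ht) (interior_subset he))

theorem exists_norm_le_of_sub_mem_of_add_mem (hK : IsProperCone K) :
    ∃ C, ∀ v x : Fin n → ℝ, v - x ∈ K → v + x ∈ K → ‖x‖ ≤ C * ‖v‖ := by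
  set g : (Fin n → ℝ) → ℝ := fun y => Metric.infDist y K + Metric.infDist (-y) K
  have hK0 : K.Nonempty := ⟨0, hK.zero_mem⟩
  -- `g` is positive on the unit sphere because `K ∩ -K = {0}`; by compactness it is bounded below.
  have hpos : ∀ y ∈ Metric.sphere (0 : Fin n → ℝ) 1, 0 < g y := by
    intro y hy
    refine lt_of_le_of_ne (add_nonneg Metric.infDist_nonneg Metric.infDist_nonneg) fun hg => ?_
    obtain ⟨hy0, hny0⟩ :=
      (add_eq_zero_iff_of_nonneg Metric.infDist_nonneg Metric.infDist_nonneg).1 hg.symm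
    have := hK.eq_zero_of_mem_of_neg_mem ((hK.1.mem_iff_infDist_zero hK0).2 hy0)
      ((hK.1.mem_iff_infDist_zero hK0).2 hny0)
    simp [this] at hy
  have hg : Continuous g :=
    (Metric.continuous_infDist_pt K).add ((Metric.continuous_infDist_pt K).comp continuous_neg)
  obtain ⟨δ, hδ, hδg⟩ := (isCompact_sphere 0 1).exists_forall_le' hg.continuousOn hpos
  refine ⟨2 / δ, fun v x hvx hxv => ?_⟩
  rcases eq_or_ne x 0 with rfl | hx
  · simp only [norm_zero]; positivity
  set r := ‖x‖
  have hr : 0 < r := norm_pos_iff.2 hx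
  have hdist : Metric.infDist (r⁻¹ • x) K ≤ r⁻¹ * ‖v‖ := by
    refine (Metric.infDist_le_dist_of_mem (hK.smul_mem (inv_nonneg.2 hr.le) hxv)).trans_eq ?_
    rw [dist_eq_norm, show r⁻¹ • x - r⁻¹ • (v + x) = -(r⁻¹ • v) by module, norm_neg, norm_smul,
      Real.norm_of_nonneg (inv_nonneg.2 hr.le)]
  have hdist' : Metric.infDist (-(r⁻¹ • x)) K ≤ r⁻¹ * ‖v‖ := by
    refine (Metric.infDist_le_dist_of_mem (hK.smul_mem (inv_nonneg.2 hr.le) hvx)).trans_eq ?_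
    rw [dist_eq_norm, show -(r⁻¹ • x) - r⁻¹ • (v - x) = -(r⁻¹ • v) by module, norm_neg, norm_smul,
      Real.norm_of_nonneg (inv_nonneg.2 hr.le)]
  have hδr := hδg (r⁻¹ • x) (by simp [norm_smul, r, hr.ne'])
  rw [div_mul_eq_mul_div, le_div_iff₀ hδ]
  calc r * δ ≤ r * (2 * (r⁻¹ * ‖v‖)) := by gcongr; linarith
    _ = 2 * ‖v‖ := by field_simp
end IsProperCone

section ConeNonneg

variable {n : ℕ} {K : Set (Fin n → ℝ)} {M N : Matrix (Fin n) (Fin n) ℝ}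

theorem KNonneg.mul (hM : KNonneg K M) (hN : KNonneg K N) : KNonneg K (M * N) := fun x hx => by
  rw [← Matrix.mulVec_mulVec]
  exact hM _ (hN x hx)

theorem KNonneg.pow (hM : KNonneg K M) (k : ℕ) : KNonneg K (M ^ k) := by
  induction k with
  | zero => simp [KNonneg]
  | succ k ih => rw [pow_succ]; exact ih.mul hM

theorem KNonneg.add (hK : IsProperCone K) (hM : KNonneg K M) (hN : KNonneg K N) :
    KNonneg K (M + N) := fun x hx => by
  rw [Matrix.add_mulVec]
  exact hK.add_mem (hM x hx) (hN x hx)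

theorem KNonneg.sum (hK : IsProperCone K) {s : Finset ℕ} {f : ℕ → Matrix (Fin n) (Fin n) ℝ}
    (hf : ∀ j ∈ s, KNonneg K (f j)) : KNonneg K (∑ j ∈ s, f j) :=
  Finset.sum_induction f (KNonneg K) (fun _ _ => KNonneg.add hK)
    (fun x _ => by simpa using hK.zero_mem) hf

theorem isClosed_setOf_kNonneg (hK : IsClosed K) :
    IsClosed {M : Matrix (Fin n) (Fin n) ℝ | KNonneg K M} := by
  simp only [KNonneg, Set.ofPred_forall]
  exact isClosed_biInter fun x _ => hK.preimage (continuous_id.matrix_mulVec continuous_const)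

theorem KMonotone.mul (hM : KMonotone K M) (hN : KMonotone K N) : KMonotone K (M * N) := by
  refine ⟨hM.1.mul hN.1, ?_⟩
  rw [Matrix.mul_inv_rev]
  exact hN.2.mul hM.2

theorem KNonneg.kMonotone_one_sub_of_tendsto_pow (hK : IsProperCone K) (hM : KNonneg K M)
    (h : Tendsto (M ^ ·) atTop (𝓝 0)) : KMonotone K (1 - M) := by
  have hdet : IsUnit (1 - M).det := by
    rw [isUnit_iff_ne_zero]
    intro h0
    have hlim : Tendsto (fun k => (1 - M ^ k).det) atTop (𝓝 1) := by
      have hcont : Continuous fun X : Matrix (Fin n) (Fin n) ℝ => (1 - X).det :=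
        (continuous_const.sub continuous_id).matrix_det
      simpa [Function.comp_def] using (hcont.tendsto 0).comp h
    have hzero (k : ℕ) : (1 - M ^ k).det = 0 := by
      rw [← geom_sum_mul_neg, Matrix.det_mul, h0, mul_zero]
    simp only [hzero] at hlim
    exact zero_ne_one (tendsto_nhds_unique tendsto_const_nhds hlim)
  refine ⟨(Matrix.isUnit_iff_isUnit_det _).2 hdet, ?_⟩
  have hpartial (k : ℕ) : ∑ j ∈ range k, M ^ j = (1 - M ^ k) * (1 - M)⁻¹ := by
    rw [← geom_sum_mul_neg, mul_assoc, Matrix.mul_nonsing_inv _ hdet, mul_one]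
  have hlim : Tendsto (fun k => ∑ j ∈ range k, M ^ j) atTop (𝓝 (1 - M)⁻¹) := by
    simpa [hpartial] using ((tendsto_const_nhds (x := 1)).sub h).mul_const (1 - M)⁻¹
  exact (isClosed_setOf_kNonneg hK.1).mem_of_tendsto hlim
    (Eventually.of_forall fun k => KNonneg.sum hK fun j _ => hM.pow j)

theorem KNonneg.smul_pow_sub_pow_mulVec_mem (hK : IsProperCone K) (hM : KNonneg K M) {θ : ℝ}
    (hθ : 0 ≤ θ) {u : Fin n → ℝ} (hu : θ • u - M *ᵥ u ∈ K) (k : ℕ) :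
    θ ^ k • u - (M ^ k) *ᵥ u ∈ K := by
  induction k with
  | zero => simpa using hK.zero_mem
  | succ k ih =>
    have hstep := hK.add_mem (hK.smul_mem (pow_nonneg hθ k) hu) (hM _ ih)
    convert hstep using 1
    rw [pow_succ' M, ← Matrix.mulVec_mulVec, Matrix.mulVec_sub, Matrix.mulVec_smul, pow_succ]
    module

theorem KNonneg.smul_pow_sub_pow_mulVec_mem_of_smul_sub_mem (hK : IsProperCone K)
    (hM : KNonneg K M) {θ : ℝ} (hθ : 0 ≤ θ) {u : Fin n → ℝ} (hu : θ • u - M *ᵥ u ∈ K) {c : ℝ}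
    (hc : 0 ≤ c) {x : Fin n → ℝ} (hx : c • u - x ∈ K) (k : ℕ) :
    (c * θ ^ k) • u - (M ^ k) *ᵥ x ∈ K := by
  convert hK.add_mem (hK.smul_mem hc (hM.smul_pow_sub_pow_mulVec_mem hK hθ hu k)) (hM.pow k _ hx)
    using 1
  simp only [Matrix.mulVec_sub, Matrix.mulVec_smul]
  module

theorem KNonneg.tendsto_pow_of_kMonotone_one_sub (hK : IsProperCone K) (hM : KNonneg K M)
    (h : KMonotone K (1 - M)) : Tendsto (M ^ ·) atTop (𝓝 0) := by
  obtain ⟨e, he⟩ := hK.2.2.2.2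
  set u := (1 - M)⁻¹ *ᵥ e
  have hMu : M *ᵥ u = u - e := by
    have hu : (1 - M) *ᵥ u = e := by
      rw [Matrix.mulVec_mulVec, Matrix.mul_nonsing_inv _ ((Matrix.isUnit_iff_isUnit_det _).1 h.1),
        Matrix.one_mulVec]
    rw [← hu, Matrix.sub_mulVec, Matrix.one_mulVec, sub_sub_cancel]
  have hue : u - e ∈ K := hMu ▸ hM u (h.2 e (interior_subset he))
  obtain ⟨t, ht, hte⟩ := ((eventually_ge_atTop 1).and (hK.eventually_smul_sub_mem he u)).exists
  -- `M u = u - e ≤_K (1 - t⁻¹) u` because `t⁻¹ u ≤_K e`.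
  have hθ : 0 ≤ 1 - t⁻¹ := sub_nonneg.2 (inv_le_one_of_one_le₀ ht)
  have hθu : (1 - t⁻¹) • u - M *ᵥ u ∈ K := by
    convert hK.smul_mem (inv_nonneg.2 (zero_le_one.trans ht)) hte using 1
    rw [hMu, smul_sub, smul_smul, inv_mul_cancel₀ (by positivity), one_smul, sub_smul, one_smul]
    abel
  obtain ⟨C, hC⟩ := hK.exists_norm_le_of_sub_mem_of_add_mem
  refine Matrix.tendsto_of_forall_tendsto_mulVec fun x => ?_
  obtain ⟨c, hc, hcx, hcx'⟩ := ((eventually_ge_atTop 0).and ((hK.eventually_smul_sub_mem he x).and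
    (hK.eventually_smul_sub_mem he (-x)))).exists
  have hcu (y : Fin n → ℝ) (hy : c • e - y ∈ K) : c • u - y ∈ K := by
    convert hK.add_mem hy (hK.smul_mem hc hue) using 1
    module
  have hbound (k : ℕ) : ‖(M ^ k) *ᵥ x‖ ≤ C * ‖(c * (1 - t⁻¹) ^ k) • u‖ :=
    hC _ _ (hM.smul_pow_sub_pow_mulVec_mem_of_smul_sub_mem hK hθ hθu hc (hcu x hcx) k)
      (by simpa [Matrix.mulVec_neg] using
        hM.smul_pow_sub_pow_mulVec_mem_of_smul_sub_mem hK hθ hθu hc (hcu (-x) hcx') k)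
  rw [Matrix.zero_mulVec]
  refine squeeze_zero_norm hbound ?_
  simpa [norm_smul, abs_of_nonneg hc, abs_of_nonneg hθ, mul_comm, mul_assoc, mul_left_comm] using
    ((tendsto_pow_atTop_nhds_zero_of_lt_one hθ (by simp; linarith)).const_mul (C * c * ‖u‖))

theorem KNonneg.kMonotone_one_sub_iff_specRad_lt_one (hK : IsProperCone K) (hM : KNonneg K M) :
    KMonotone K (1 - M) ↔ specRad M < 1 := by
  rw [specRad_lt_one_iff_tendsto_pow]
  exact ⟨hM.tendsto_pow_of_kMonotone_one_sub hK, hM.kMonotone_one_sub_of_tendsto_pow hK⟩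

end ConeNonneg

theorem one_sub_pow_add_geom_sum_mul {R : Type*} [Ring R] {H W : R} (hW : (1 - H) * W = 1)
    (X : R) (s : ℕ) :
    1 - (H ^ s + (∑ j ∈ range s, H ^ j) * X) = (1 - H ^ s) * (1 - W * X) := by
  have hsum : ∑ j ∈ range s, H ^ j = (1 - H ^ s) * W := by
    rw [← geom_sum_mul_neg, mul_assoc, hW, mul_one]
  rw [hsum]
  noncomm_ring

section TwoStage

variable {n : ℕ}

theorem semiconjBy_twoStageThat (F G V : Matrix (Fin n) (Fin n) ℝ) (s : ℕ) :
    SemiconjBy F⁻¹ (twoStageThat F G V s) (twoStageT F G V s) := by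
  have hH : SemiconjBy F⁻¹ (G * F⁻¹) (F⁻¹ * G) := (mul_assoc _ _ _).symm
  have hV : SemiconjBy F⁻¹ (V * F⁻¹) (F⁻¹ * V) := (mul_assoc _ _ _).symm
  have hsum : SemiconjBy F⁻¹ (∑ j ∈ range s, (G * F⁻¹) ^ j) (∑ j ∈ range s, (F⁻¹ * G) ^ j) := by
    simp only [SemiconjBy, Finset.mul_sum, Finset.sum_mul, (hH.pow_right _).eq]
  exact (hH.pow_right s).add_right (hsum.mul_right hV)

theorem kNonneg_twoStageThat {K : Set (Fin n → ℝ)} (hK : IsProperCone K)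
    {F G V : Matrix (Fin n) (Fin n) ℝ} (hH : KNonneg K (G * F⁻¹)) (hV : KNonneg K (V * F⁻¹))
    (s : ℕ) : KNonneg K (twoStageThat F G V s) :=
  (hH.pow s).add hK ((KNonneg.sum hK fun j _ => hH.pow j).mul hV)

end TwoStage

theorem stmt_6_general {n : ℕ} (K : Set (Fin n → ℝ)) (hK : IsProperCone K)
    (A U V F G : Matrix (Fin n) (Fin n) ℝ)
    (houter : KRegularSplitting K A U V) (houterconv : specRad (U⁻¹ * V) < 1)
    (hinner : KWeakRegularSplittingII K U F G) (hinnerconv : specRad (F⁻¹ * G) < 1) :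
    ∀ s : ℕ, 1 ≤ s → specRad (twoStageT F G V s) < 1 := by
  intro s hs
  obtain ⟨-, hU, -, hV⟩ := houter
  obtain ⟨hUFG, hF, hFinv, hH⟩ := hinner
  have hFdet : IsUnit F.det := (Matrix.isUnit_iff_isUnit_det F).1 hF
  have hF' : IsUnit F⁻¹ := (Matrix.isUnit_nonsing_inv_iff).2 hF
  have hW : (1 - G * F⁻¹) * (F * U⁻¹) = 1 := by
    rw [show 1 - G * F⁻¹ = U * F⁻¹ by rw [hUFG, Matrix.sub_mul, Matrix.mul_nonsing_inv F hFdet],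
      mul_assoc, ← mul_assoc F⁻¹, Matrix.nonsing_inv_mul F hFdet, one_mul,
      Matrix.mul_nonsing_inv U ((Matrix.isUnit_iff_isUnit_det U).1 hU)]
  have hHρ : specRad (G * F⁻¹) < 1 :=
    (SemiconjBy.specRad_eq hF' (mul_assoc F⁻¹ G F⁻¹).symm) ▸ hinnerconv
  have hWN : KNonneg K (F * U⁻¹) := by
    simpa [Matrix.inv_eq_right_inv hW] using ((hH.kMonotone_one_sub_iff_specRad_lt_one hK).2 hHρ).2
  have hWVρ : specRad (F * U⁻¹ * (V * F⁻¹)) = specRad (U⁻¹ * V) := by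
    refine SemiconjBy.specRad_eq hF' ?_
    simp only [SemiconjBy, ← mul_assoc, Matrix.nonsing_inv_mul F hFdet, one_mul]
  have h1 : KMonotone K (1 - (G * F⁻¹) ^ s) :=
    ((hH.pow s).kMonotone_one_sub_iff_specRad_lt_one hK).2 (specRad_pow_lt_one hHρ hs)
  have h2 : KMonotone K (1 - F * U⁻¹ * (V * F⁻¹)) :=
    ((hWN.mul (hV.mul hFinv)).kMonotone_one_sub_iff_specRad_lt_one hK).2 (hWVρ ▸ houterconv)
  rw [← (semiconjBy_twoStageThat F G V s).specRad_eq hF',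
    ← (kNonneg_twoStageThat hK hH (hV.mul hFinv) s).kMonotone_one_sub_iff_specRad_lt_one hK,
    twoStageThat, one_sub_pow_add_geom_sum_mul hW]
  exact h1.mul h2

theorem stmt_6 {n : ℕ} (K : Set (Fin n → ℝ)) (hK : IsProperCone K)
    (A U V F G : Matrix (Fin n) (Fin n) ℝ)
    (houter : KRegularSplitting K A U V) (houterconv : specRad (U⁻¹ * V) < 1)
    (hinner : KWeakRegularSplittingII K U F G) (hinnerconv : specRad (F⁻¹ * G) < 1)
    (hcomm : V * F⁻¹ * G = G * F⁻¹ * V) :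
    ∀ s : ℕ, 1 ≤ s → specRad (twoStageT F G V s) < 1 :=
  stmt_6_general K hK A U V F G houter houterconv hinner hinnerconv
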